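/- Let X be an S-open subset of a product of topological spaces (X_t, T_t), let T' be a topology on X coordinated with the family (T_t : t ∈ T), let (Y,d) be a metric space, let a ∈ X, and let f : (X,T') → Y be strongly separately continuous at a. Then f is separately continuous at a with respect to every variable t ∈ T. -/

import Mathlib

open Function Filter Topology

/-- `Sigma1 x` (σ₁(x)): the set of points differing from `x` in at most one coordinate. -/
def Sigma1 {T : Type*} {X : T → Type*} (x : ∀ t, X t) : Set (∀ t, X t) :=
  {y | {t | y t ≠ x t}.Subsingleton}

/-- A set `A` is `S`-open if `σ₁(x) ⊆ A` for every `x ∈ A`. -/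
def SOpen {T : Type*} {X : T → Type*} (A : Set (∀ t, X t)) : Prop :=
  ∀ x ∈ A, Sigma1 x ⊆ A

theorem update_mem {T : Type*} [DecidableEq T] {X : T → Type*} {A : Set (∀ t, X t)}
    (hA : SOpen A) {x : ∀ t, X t} (hx : x ∈ A) (t : T) (v : X t) :
    Function.update x t v ∈ A := by
  apply hA x hx
  intro s hs s' hs'
  simp only [Set.mem_setOf_eq] at hs hs'
  have h1 : s = t := by
    by_contra h
    exact hs (Function.update_of_ne h v x)
  have h2 : s' = t := by
    by_contra h
    exact hs' (Function.update_of_ne h v x)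
  rw [h1, h2]

/-- The point `x_t^v`: `x` with its `t`-th coordinate replaced by `v`, as an element
of the `S`-open set `A`. -/
def updPt {T : Type*} [DecidableEq T] {X : T → Type*} {A : Set (∀ t, X t)}
    (hA : SOpen A) (x : ↥A) (t : T) (v : X t) : ↥A :=
  ⟨Function.update x.1 t v, update_mem hA x.2 t v⟩

/-- `f : (A, T') → Y` is strongly separately continuous at `a` (w.r.t. every variable):
for each `t`, `lim_{x → a} dist (f x) (f (x_t^a)) = 0`, the limit taken in `T'`. -/
def StrSepContAt {T : Type*} [DecidableEq T] {X : T → Type*} {A : Set (∀ t, X t)}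
    (hA : SOpen A) (T' : TopologicalSpace ↥A) {Y : Type*} [MetricSpace Y]
    (f : ↥A → Y) (a : ↥A) : Prop :=
  ∀ t : T, Filter.Tendsto (fun x : ↥A => dist (f x) (f (updPt hA x t (a.1 t))))
    (@nhds _ T' a) (nhds 0)

/-- A topology `T'` on `A` is coordinated with the family of factor topologies:
for every `t` and `a ∈ A`, `lim_{v → a t} a_t^v = a` in `(A, T')`. -/
def Coordinated {T : Type*} [DecidableEq T] {X : T → Type*} [∀ t, TopologicalSpace (X t)]
    {A : Set (∀ t, X t)} (hA : SOpen A) (T' : TopologicalSpace ↥A) : Prop :=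
  ∀ (t : T) (a : ↥A), Filter.Tendsto (fun v : X t => updPt hA a t v)
    (nhds (a.1 t)) (@nhds _ T' a)

section updPt

variable {T : Type*} [DecidableEq T] {X : T → Type*} {A : Set (∀ t, X t)} (hA : SOpen A)

@[simp]
theorem updPt_self (x : ↥A) (t : T) : updPt hA x t (x.1 t) = x :=
  Subtype.ext (Function.update_eq_self t x.1)

@[simp]
theorem updPt_updPt (x : ↥A) (t : T) (v w : X t) :
    updPt hA (updPt hA x t v) t w = updPt hA x t w :=
  Subtype.ext (Function.update_idem v w x.1)

end updPt

/-- If `T'` is coordinated with the factor topologies and `f : (A, T') → Y` is strongly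
separately continuous at `a`, then `f` is separately continuous at `a` with respect to
every variable. -/
theorem strSepContAt_sepContAt {T : Type*} [DecidableEq T] {X : T → Type*}
    [∀ t, TopologicalSpace (X t)] {A : Set (∀ t, X t)} (hA : SOpen A)
    (T' : TopologicalSpace ↥A) (hc : Coordinated hA T') {Y : Type*} [MetricSpace Y]
    (f : ↥A → Y) (a : ↥A) (hf : StrSepContAt hA T' f a) :
    ∀ t : T, ContinuousAt (fun v : X t => f (updPt hA a t v)) (a.1 t) := by
  intro t
  rw [ContinuousAt, updPt_self, tendsto_iff_dist_tendsto_zero]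
  -- Along `v ↦ a_t^v`, resetting the `t`-th coordinate to `a t` always gives back `a`.
  simpa only [comp_def, updPt_updPt, updPt_self] using (hf t).comp (hc t a)
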